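/- arXiv:2005.05681 — 5 statements merged into one kernel-verified Lean document; each statement's English description precedes it below -/
import Mathlib

section
/- If p and q are periods of a string T with p + q ≤ |T|, then gcd(p, q) is also a period of T (weak Fine and Wilf periodicity lemma). -/
/-- `p` is a period of the string (list) `S`. -/
def IsPeriod {α : Type*} (S : List α) (p : ℕ) : Prop :=
  0 < p ∧ ∀ i, i + p < S.length → S[i]? = S[i + p]?

/-- The smallest period of `S`. -/
noncomputable def minPeriod {α : Type*} (S : List α) : ℕ :=
  sInf {p | IsPeriod S p}

/-- `P` occurs in `S` at (0-indexed) position `i`. -/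
def OccursAt {α : Type*} (P S : List α) (i : ℕ) : Prop :=
  (S.drop i).take P.length = P ∧ i + P.length ≤ S.length

/-- The fragment `T[a..b]` (0-indexed, inclusive). -/
def frag {α : Type*} (T : List α) (a b : ℕ) : List α :=
  (T.drop a).take (b + 1 - a)

/-- `T[a..b]` is a run (maximal periodic fragment) of `T`. -/
def IsRun {α : Type*} (T : List α) (a b : ℕ) : Prop :=
  a ≤ b ∧ b < T.length ∧
  2 * minPeriod (frag T a b) ≤ b + 1 - a ∧
  (a = 0 ∨ T[a - 1]? ≠ T[a - 1 + minPeriod (frag T a b)]?) ∧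
  (b + 1 = T.length ∨ T[b + 1]? ≠ T[b + 1 - minPeriod (frag T a b)]?)

/-- The occurrence of the square `U · U` at position `s` of `T` is induced by the run `T[a..b]`. -/
def InducedOcc {α : Type*} (T U : List α) (s a b : ℕ) : Prop :=
  U ≠ [] ∧ IsRun T a b ∧ OccursAt (U ++ U) T s ∧ a ≤ s ∧
  s + 2 * U.length ≤ b + 1 ∧ minPeriod U = minPeriod (frag T a b)

/-- The `k`-th power `V^k` of a string `V`. -/
def listPow {α : Type*} (V : List α) (k : ℕ) : List α :=
  (List.replicate k V).flatten

/-!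
Subtractive Euclid on periods: if `q < p` are periods of `T` with `p + q ≤ |T|`, then `p - q`
is again a period (compare `T[i]` and `T[i + p - q]` through `T[i + p]` when that position
exists, and through `T[i - q]` otherwise). Replacing `(p, q)` by `(p - q, q)` keeps the gcd
and the bound `p + q ≤ |T|`, and the descent ends at `p = q = gcd p q`.
-/

theorem IsPeriod.sub {α : Type*} {S : List α} {p q : ℕ} (hp : IsPeriod S p) (hq : IsPeriod S q)
    (hqp : q < p) (h : p + q ≤ S.length) : IsPeriod S (p - q) := by
  refine ⟨Nat.sub_pos_of_lt hqp, fun i hi => ?_⟩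
  by_cases hip : i + p < S.length
  · calc S[i]? = S[i + p]? := hp.2 i hip
      _ = S[i + (p - q) + q]? := by congr 1; omega
      _ = S[i + (p - q)]? := (hq.2 _ (by omega)).symm
  · calc S[i]? = S[i - q + q]? := by congr 1; omega
      _ = S[i - q]? := (hq.2 _ (by omega)).symm
      _ = S[i - q + p]? := hp.2 _ (by omega)
      _ = S[i + (p - q)]? := by congr 1; omega

/-- Weak Fine and Wilf periodicity lemma: if `p` and `q` are periods of `T` with
`p + q ≤ |T|`, then `gcd p q` is also a period of `T`. -/
theorem stmt1 {α : Type*} (T : List α) (p q : ℕ)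
    (hp : IsPeriod T p) (hq : IsPeriod T q) (h : p + q ≤ T.length) :
    IsPeriod T (Nat.gcd p q) := by
  induction hn : p + q using Nat.strong_induction_on generalizing p q with
  | _ n ih =>
  wlog hpq : p ≤ q generalizing p q
  · rw [Nat.gcd_comm]
    exact this q p hq hp (by omega) (by omega) (by omega)
  obtain rfl | hlt := hpq.eq_or_lt
  · rwa [Nat.gcd_self]
  have hsub := ih (q - p + p) (by have := hp.1; omega) (q - p) p (hq.sub hp hlt (by omega)) hp
    (by omega) rfl
  rwa [Nat.gcd_sub_self_left hlt.le, Nat.gcd_comm] at hsub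
end

section
/- For any position i in a string T of length n and any even integer m, there are at most 4 highly periodic runs R containing position i with m ≤ per(R) < (3/2)m. Consequently, each position is contained in O(log n) highly periodic runs, and the sum of the lengths of all highly periodic runs in T is O(n log n). -/
/-!
Two runs that share a fragment of length `per R₁ + per R₂` coincide: inside the shared fragment
each period extends to the other run, so the two minimal periods agree, and then the union of the
runs has that period, which by maximality forces both runs to be the union.

A highly periodic run containing `i` with `m ≤ per R` has length at least `4m`, so it contains
one of the four fragments of length `3m` ending at `i, i + m, i + 2m, i + 3m`; when
`2 per R < 3m` these fragments are long enough for the first paragraph, whence at most four such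
runs. The bands `[2^k, 3·2^(k-1))` and `[3·2^k, 9·2^(k-1))` with `2^k ≤ n` cover all periods,
giving `O(log n)` highly periodic runs through each position; summing over positions gives
`O(n log n)` for the total length.
-/

section Runs

variable {α : Type*}

def HasPeriodOn (T : List α) (a b p : ℕ) : Prop :=
  ∀ j, a ≤ j → j + p ≤ b → T[j]? = T[j + p]?

theorem HasPeriodOn.mono {T : List α} {a b a' b' p : ℕ} (h : HasPeriodOn T a b p)
    (ha : a ≤ a') (hb : b' ≤ b) : HasPeriodOn T a' b' p :=
  fun j hj hjp => h j (by omega) (by omega)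

theorem HasPeriodOn.union {T : List α} {a₁ b₁ a₂ b₂ p : ℕ} (h₁ : HasPeriodOn T a₁ b₁ p)
    (h₂ : HasPeriodOn T a₂ b₂ p) (hoverlap : max a₁ a₂ + p ≤ min b₁ b₂ + 1) :
    HasPeriodOn T (min a₁ a₂) (max b₁ b₂) p := by
  intro j hj hjp
  by_cases hj₁ : a₁ ≤ j ∧ j + p ≤ b₁
  · exact h₁ j hj₁.1 hj₁.2
  · exact h₂ j (by omega) (by omega)

theorem HasPeriodOn.of_window_right {T : List α} {a b c d p q : ℕ} (hp : 0 < p)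
    (hab : HasPeriodOn T a b p) (hcd : HasPeriodOn T c d q) (hwin : c + p + q ≤ d + 1)
    (hac : a ≤ c) : HasPeriodOn T c b q := by
  intro j
  induction j using Nat.strong_induction_on with
  | _ j ih =>
    intro hcj hjq
    by_cases hjd : j + q ≤ d
    · exact hcd j hcj hjd
    · have hj : j - p + p = j := Nat.sub_add_cancel (by omega)
      calc T[j]? = T[j - p]? := by rw [← hj, ← hab (j - p) (by omega) (by omega), hj]
        _ = T[j - p + q]? := ih (j - p) (by omega) (by omega) (by omega)
        _ = T[j + q]? := by
          rw [hab (j - p + q) (by omega) (by omega), show j - p + q + p = j + q by omega]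

theorem HasPeriodOn.of_window {T : List α} {a b c d p q : ℕ} (hp : 0 < p)
    (hab : HasPeriodOn T a b p) (hcd : HasPeriodOn T c d q) (hwin : c + p + q ≤ d + 1)
    (hac : a ≤ c) (hdb : d ≤ b) : HasPeriodOn T a b q := by
  have hright := hab.of_window_right hp hcd hwin hac
  suffices ∀ k j, c - j = k → a ≤ j → j + q ≤ b → T[j]? = T[j + q]? from
    fun j => this _ j rfl
  intro k
  induction k using Nat.strong_induction_on with
  | _ k ih =>
    intro j hk hj hjq
    by_cases hcj : c ≤ j
    · exact hright j hcj hjq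
    · calc T[j]? = T[j + p]? := hab j hj (by omega)
        _ = T[j + p + q]? := ih (c - (j + p)) (by omega) (j + p) rfl (by omega) (by omega)
        _ = T[j + q]? := by
          rw [show j + p + q = j + q + p by omega, hab (j + q) (by omega) (by omega)]

theorem isPeriod_length_succ (S : List α) : IsPeriod S (S.length + 1) :=
  ⟨Nat.succ_pos _, fun _ h => by omega⟩

theorem minPeriod_isPeriod (S : List α) : IsPeriod S (minPeriod S) :=
  Nat.sInf_mem (s := {p | IsPeriod S p}) ⟨_, isPeriod_length_succ S⟩

theorem minPeriod_pos (S : List α) : 0 < minPeriod S :=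
  (minPeriod_isPeriod S).1

theorem minPeriod_le {S : List α} {p : ℕ} (h : IsPeriod S p) : minPeriod S ≤ p :=
  Nat.sInf_le h

theorem getElem?_frag (T : List α) (a b j : ℕ) :
    (frag T a b)[j]? = if j < b + 1 - a then T[a + j]? else none := by
  simp [frag, List.getElem?_take, List.getElem?_drop]

theorem isPeriod_frag_iff {T : List α} {a b : ℕ} (hb : b < T.length) (hab : a ≤ b) (p : ℕ) :
    IsPeriod (frag T a b) p ↔ 0 < p ∧ HasPeriodOn T a b p := by
  have hlen : (frag T a b).length = b + 1 - a := by
    simp only [frag, List.length_take, List.length_drop]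
    omega
  refine and_congr_right fun _ => ⟨fun h j hj hjp => ?_, fun h i hi => ?_⟩
  · have := h (j - a) (by omega)
    rwa [getElem?_frag, getElem?_frag, if_pos (by omega), if_pos (by omega),
      show a + (j - a) = j by omega, show a + (j - a + p) = j + p by omega] at this
  · rw [hlen] at hi
    rw [getElem?_frag, getElem?_frag, if_pos (by omega), if_pos hi, ← Nat.add_assoc]
    exact h (a + i) (by omega) (by omega)

namespace IsRun

variable {T : List α} {a b : ℕ}

theorem hasPeriodOn (h : IsRun T a b) : HasPeriodOn T a b (minPeriod (frag T a b)) :=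
  ((isPeriod_frag_iff h.2.1 h.1 _).1 (minPeriod_isPeriod _)).2

theorem minPeriod_le_of_hasPeriodOn (h : IsRun T a b) {p : ℕ} (hp : 0 < p)
    (hper : HasPeriodOn T a b p) : minPeriod (frag T a b) ≤ p :=
  minPeriod_le ((isPeriod_frag_iff h.2.1 h.1 p).2 ⟨hp, hper⟩)

theorem eq_of_hasPeriodOn (h : IsRun T a b) {A B : ℕ}
    (hper : HasPeriodOn T A B (minPeriod (frag T a b))) (hA : A ≤ a) (hB : b ≤ B)
    (hBT : B < T.length) : A = a ∧ B = b := by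
  obtain ⟨hab, -, hlen, hleft, hright⟩ := h
  have hp := minPeriod_pos (frag T a b)
  constructor
  · by_contra hne
    rcases hleft with h0 | hleft
    · omega
    · exact hleft (hper (a - 1) (by omega) (by omega))
  · by_contra hne
    rcases hright with h0 | hright
    · omega
    · have := hper (b + 1 - minPeriod (frag T a b)) (by omega) (by omega)
      rw [Nat.sub_add_cancel (by omega)] at this
      exact hright this.symm

theorem eq_of_common_window {a₁ b₁ a₂ b₂ e L : ℕ} (h₁ : IsRun T a₁ b₁) (h₂ : IsRun T a₂ b₂)
    (h₁e : a₁ + L ≤ e + 1) (he₁ : e ≤ b₁) (h₂e : a₂ + L ≤ e + 1) (he₂ : e ≤ b₂)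
    (hL : minPeriod (frag T a₁ b₁) + minPeriod (frag T a₂ b₂) ≤ L) : a₁ = a₂ ∧ b₁ = b₂ := by
  set p₁ := minPeriod (frag T a₁ b₁)
  set p₂ := minPeriod (frag T a₂ b₂)
  have hp₁ : 0 < p₁ := minPeriod_pos _
  have hp₂ : 0 < p₂ := minPeriod_pos _
  have hwin₁ := h₁.hasPeriodOn.mono (a' := e + 1 - L) (b' := e) (by omega) he₁
  have hwin₂ := h₂.hasPeriodOn.mono (a' := e + 1 - L) (b' := e) (by omega) he₂
  have hp : p₁ = p₂ := le_antisymm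
    (h₁.minPeriod_le_of_hasPeriodOn hp₂
      (h₁.hasPeriodOn.of_window hp₁ hwin₂ (by omega) (by omega) he₁))
    (h₂.minPeriod_le_of_hasPeriodOn hp₁
      (h₂.hasPeriodOn.of_window hp₂ hwin₁ (by omega) (by omega) he₂))
  have hper₂ : HasPeriodOn T a₂ b₂ p₁ := hp ▸ h₂.hasPeriodOn
  have hunion : HasPeriodOn T (min a₁ a₂) (max b₁ b₂) p₁ :=
    h₁.hasPeriodOn.union hper₂ (by omega)
  have hmax : max b₁ b₂ < T.length := max_lt h₁.2.1 h₂.2.1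
  have e₁ := h₁.eq_of_hasPeriodOn hunion (min_le_left _ _) (le_max_left _ _) hmax
  have e₂ := h₂.eq_of_hasPeriodOn (hp ▸ hunion) (min_le_right _ _) (le_max_right _ _) hmax
  omega

end IsRun

theorem runs_finite (T : List α) : {ab : ℕ × ℕ | IsRun T ab.1 ab.2}.Finite :=
  ((Set.finite_Iio T.length).prod (Set.finite_Iio T.length)).subset
    fun _ h => ⟨h.1.trans_lt h.2.1, h.2.1⟩

/-- Of the fragments of length `3m` ending at `i, i + m, i + 2m, i + 3m`, the last one ending
in `[a, b]` lies inside `[a, b]`. -/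
theorem window_le_of_four_mul_le {a b i m : ℕ} (hm : 0 < m) (hai : a ≤ i) (hib : i ≤ b)
    (hlen : 4 * m ≤ b + 1 - a) :
    a + 3 * m ≤ i + min 3 ((b - i) / m) * m + 1 ∧ i + min 3 ((b - i) / m) * m ≤ b := by
  have hdiv := Nat.div_add_mod' (b - i) m
  have hmod := Nat.mod_lt (b - i) hm
  rcases le_total 3 ((b - i) / m) with h | h
  · have := Nat.mul_le_mul_right m h
    rw [min_eq_left h]
    omega
  · rw [min_eq_right h]
    omega

theorem ncard_highlyPeriodic_runs_mem_period_band_le (T : List α) (i m : ℕ) (hm : 0 < m) :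
    {ab : ℕ × ℕ | IsRun T ab.1 ab.2 ∧
        4 * minPeriod (frag T ab.1 ab.2) ≤ ab.2 + 1 - ab.1 ∧
        ab.1 ≤ i ∧ i ≤ ab.2 ∧
        m ≤ minPeriod (frag T ab.1 ab.2) ∧
        2 * minPeriod (frag T ab.1 ab.2) < 3 * m}.ncard ≤ 4 := by
  calc _ ≤ (Finset.range 4 : Set ℕ).ncard := by
        refine Set.ncard_le_ncard_of_injOn (fun ab => min 3 ((ab.2 - i) / m)) ?_ ?_
        · intro ab _
          simp only [Finset.coe_range, Set.mem_Iio]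
          omega
        · rintro ⟨a₁, b₁⟩ ⟨h₁, hhp₁, hai₁, hib₁, hm₁, hlt₁⟩
            ⟨a₂, b₂⟩ ⟨h₂, hhp₂, hai₂, hib₂, hm₂, hlt₂⟩ hk
          obtain ⟨l₁, r₁⟩ := window_le_of_four_mul_le hm hai₁ hib₁ (by omega)
          obtain ⟨l₂, r₂⟩ := window_le_of_four_mul_le hm hai₂ hib₂ (by omega)
          simp only at hk
          rw [hk] at l₁ r₁
          obtain ⟨rfl, rfl⟩ := h₁.eq_of_common_window h₂ l₁ r₁ l₂ r₂ (by omega)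
          rfl
    _ = 4 := by simp

theorem exists_pow_two_band {p : ℕ} (hp : 0 < p) : ∃ k ≤ Nat.log 2 p,
    (2 ^ k ≤ p ∧ 2 * p < 3 * 2 ^ k) ∨ (3 * 2 ^ k ≤ p ∧ 2 * p < 3 * (3 * 2 ^ k)) := by
  have hlo : 2 ^ Nat.log 2 p ≤ p := Nat.pow_log_le_self 2 hp.ne'
  have hhi : p < 2 ^ (Nat.log 2 p + 1) := Nat.lt_pow_succ_log_self (by norm_num) p
  rcases Nat.lt_or_ge (2 * p) (3 * 2 ^ Nat.log 2 p) with h | h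
  · exact ⟨_, le_rfl, Or.inl ⟨hlo, h⟩⟩
  · obtain ⟨k, hk⟩ : ∃ k, Nat.log 2 p = k + 1 := Nat.exists_eq_add_one.2 (by
      by_contra h0
      rw [Nat.eq_zero_of_not_pos h0] at h hhi
      omega)
    simp only [hk, pow_succ] at h hhi
    exact ⟨k, by omega, Or.inr ⟨by omega, by omega⟩⟩

theorem ncard_highlyPeriodic_runs_mem_le (T : List α) (i : ℕ) :
    {ab : ℕ × ℕ | IsRun T ab.1 ab.2 ∧
        4 * minPeriod (frag T ab.1 ab.2) ≤ ab.2 + 1 - ab.1 ∧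
        ab.1 ≤ i ∧ i ≤ ab.2}.ncard ≤ 8 * (Nat.log 2 T.length + 1) := by
  let band (m : ℕ) : Set (ℕ × ℕ) := {ab | IsRun T ab.1 ab.2 ∧
      4 * minPeriod (frag T ab.1 ab.2) ≤ ab.2 + 1 - ab.1 ∧
      ab.1 ≤ i ∧ i ≤ ab.2 ∧
      m ≤ minPeriod (frag T ab.1 ab.2) ∧
      2 * minPeriod (frag T ab.1 ab.2) < 3 * m}
  have hband (m : ℕ) : (band m).Finite := (runs_finite T).subset fun _ h => h.1
  have hcover : {ab : ℕ × ℕ | IsRun T ab.1 ab.2 ∧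
        4 * minPeriod (frag T ab.1 ab.2) ≤ ab.2 + 1 - ab.1 ∧ ab.1 ≤ i ∧ i ≤ ab.2} ⊆
      ⋃ k ∈ Finset.range (Nat.log 2 T.length + 1), band (2 ^ k) ∪ band (3 * 2 ^ k) := by
    rintro ab ⟨hrun, hhp, hai, hib⟩
    have hp := minPeriod_pos (frag T ab.1 ab.2)
    obtain ⟨k, hk, hmem⟩ := exists_pow_two_band hp
    have hkn : k ≤ Nat.log 2 T.length :=
      hk.trans (Nat.log_mono_right (by have := hrun.2.1; omega))
    simp only [Set.mem_iUnion, Finset.mem_range, exists_prop]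
    refine ⟨k, by omega, ?_⟩
    rcases hmem with h | h
    · exact Or.inl ⟨hrun, hhp, hai, hib, h⟩
    · exact Or.inr ⟨hrun, hhp, hai, hib, h⟩
  calc _ ≤ (⋃ k ∈ Finset.range (Nat.log 2 T.length + 1), band (2 ^ k) ∪ band (3 * 2 ^ k)).ncard :=
        Set.ncard_le_ncard hcover
          (Set.Finite.biUnion (Finset.finite_toSet _) fun k _ => (hband _).union (hband _))
    _ ≤ ∑ k ∈ Finset.range (Nat.log 2 T.length + 1), (band (2 ^ k) ∪ band (3 * 2 ^ k)).ncard :=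
        Finset.set_ncard_biUnion_le _ _
    _ ≤ ∑ _k ∈ Finset.range (Nat.log 2 T.length + 1), (4 + 4) := by
        refine Finset.sum_le_sum fun k _ => (Set.ncard_union_le _ _).trans (add_le_add ?_ ?_)
        · exact ncard_highlyPeriodic_runs_mem_period_band_le T i _ (by positivity)
        · exact ncard_highlyPeriodic_runs_mem_period_band_le T i _ (by positivity)
    _ = 8 * (Nat.log 2 T.length + 1) := by simp [mul_comm]

theorem finsum_length_highlyPeriodic_runs_le (T : List α) :
    ∑ᶠ ab ∈ {ab : ℕ × ℕ | IsRun T ab.1 ab.2 ∧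
        4 * minPeriod (frag T ab.1 ab.2) ≤ ab.2 + 1 - ab.1},
      (ab.2 + 1 - ab.1) ≤ 8 * T.length * (Nat.log 2 T.length + 1) := by
  classical
  have hfin : {ab : ℕ × ℕ | IsRun T ab.1 ab.2 ∧
      4 * minPeriod (frag T ab.1 ab.2) ≤ ab.2 + 1 - ab.1}.Finite :=
    (runs_finite T).subset fun _ h => h.1
  let covers (ab : ℕ × ℕ) (x : ℕ) : Prop := ab.1 ≤ x ∧ x ≤ ab.2
  rw [finsum_mem_eq_finite_toFinset_sum _ hfin]
  calc ∑ ab ∈ hfin.toFinset, (ab.2 + 1 - ab.1)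
      = ∑ ab ∈ hfin.toFinset, ((Finset.range T.length).bipartiteAbove covers ab).card := by
        refine Finset.sum_congr rfl fun ab hab => ?_
        have hb : ab.2 < T.length := ((Set.Finite.mem_toFinset hfin).1 hab).1.2.1
        rw [Finset.bipartiteAbove, show {x ∈ Finset.range T.length | covers ab x} =
          Finset.Icc ab.1 ab.2 by ext; simp only [Finset.mem_filter, Finset.mem_range,
            Finset.mem_Icc, covers]; omega, Nat.card_Icc]
    _ = ∑ x ∈ Finset.range T.length, (hfin.toFinset.bipartiteBelow covers x).card :=
        Finset.sum_card_bipartiteAbove_eq_sum_card_bipartiteBelow _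
    _ ≤ ∑ _x ∈ Finset.range T.length, 8 * (Nat.log 2 T.length + 1) := by
        refine Finset.sum_le_sum fun x _ => ?_
        have hbelow : (hfin.toFinset.bipartiteBelow covers x : Set (ℕ × ℕ)) =
            {ab : ℕ × ℕ | IsRun T ab.1 ab.2 ∧
              4 * minPeriod (frag T ab.1 ab.2) ≤ ab.2 + 1 - ab.1 ∧ ab.1 ≤ x ∧ x ≤ ab.2} := by
          ext ab
          simp [Finset.bipartiteBelow, covers, and_assoc]
        rw [← Set.ncard_coe_finset, hbelow]
        exact ncard_highlyPeriodic_runs_mem_le T x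
    _ = 8 * T.length * (Nat.log 2 T.length + 1) := by
        rw [Finset.sum_const, Finset.card_range, smul_eq_mul]
        ring

end Runs

/-- (i) For any position `i` of `T` and any positive even `m`, there are at most `4`
highly periodic runs `R` containing `i` with `m ≤ per(R) < (3/2)·m`.
(ii) Consequently each position is contained in `O(log n)` highly periodic runs, and
(iii) the sum of the lengths of all highly periodic runs is `O(n log n)`. -/
theorem stmt4 :
    (∀ (α : Type) (T : List α) (i m : ℕ), Even m → 0 < m →
      {ab : ℕ × ℕ | IsRun T ab.1 ab.2 ∧
          4 * minPeriod (frag T ab.1 ab.2) ≤ ab.2 + 1 - ab.1 ∧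
          ab.1 ≤ i ∧ i ≤ ab.2 ∧
          m ≤ minPeriod (frag T ab.1 ab.2) ∧
          2 * minPeriod (frag T ab.1 ab.2) < 3 * m}.ncard ≤ 4) ∧
    (∃ C : ℕ, ∀ (α : Type) (T : List α) (i : ℕ),
      {ab : ℕ × ℕ | IsRun T ab.1 ab.2 ∧
          4 * minPeriod (frag T ab.1 ab.2) ≤ ab.2 + 1 - ab.1 ∧
          ab.1 ≤ i ∧ i ≤ ab.2}.ncard ≤ C * (Nat.log 2 T.length + 1)) ∧
    (∃ C : ℕ, ∀ (α : Type) (T : List α),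
      ∑ᶠ ab ∈ {ab : ℕ × ℕ | IsRun T ab.1 ab.2 ∧
          4 * minPeriod (frag T ab.1 ab.2) ≤ ab.2 + 1 - ab.1},
        (ab.2 + 1 - ab.1) ≤ C * T.length * (Nat.log 2 T.length + 1)) :=
  ⟨fun _ T i m _ hm => ncard_highlyPeriodic_runs_mem_period_band_le T i m hm,
    ⟨8, fun _ => ncard_highlyPeriodic_runs_mem_le⟩,
    ⟨8, fun _ => finsum_length_highlyPeriodic_runs_le⟩⟩
end

section
/- A periodic string with Lyndon-root representation (L, r, a, b) occurs in a periodic string with representation (L, r', a', b') (same Lyndon root L) if and only if: (1) r = r', a ≤ a', and b ≤ b'; or (2) r = r' - 1 and a ≤ a'; or (3) r = r' - 1 and b ≤ b'; or (4) r ≤ r' - 2. -/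
/-- The Lyndon-root representation `(L, r, a, b)`: the string
`L[|L|-a+1..|L|] · L^r · L[1..b]`. -/
def rep {α : Type*} (L : List α) (r a b : ℕ) : List α :=
  L.drop (L.length - a) ++ listPow L r ++ L.take b

/-!
Both strings are factors of a long power `L^M`: `rep L r a b` occurs there at position
`c|L| + (|L| - a)` for every `c` that leaves enough room. Conversely, a primitive word is fixed
by no nontrivial rotation, so `L` occurs in `L^M` only at multiples of `|L|`. Since `r ≥ 1`,
an occurrence of `rep L r a b` in `rep L r' a' b'` contains a copy of `L`, which forces its
offset to be `c|L| + a' - a` for some `c ≥ 0`. So the occurrence exists iff some shift `c`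
satisfies `a ≤ c|L| + a'` and `(c + r)|L| + b ≤ r'|L| + b'`, and the cases `c = 0`, `c = 1`
and `c ≥ 2` give the four alternatives.
-/
section

open List

variable {α : Type*}

section Occurrence

variable {P Q S : List α} {i j : ℕ}

theorem occursAt_append_append (s P t : List α) : OccursAt P (s ++ P ++ t) s.length := by
  simp [OccursAt]

theorem OccursAt.isInfix (h : OccursAt P S i) : P <:+: S :=
  h.1 ▸ (take_prefix _ _).isInfix.trans (drop_suffix _ _).isInfix

theorem List.IsInfix.exists_occursAt (h : P <:+: S) : ∃ i, OccursAt P S i := by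
  obtain ⟨s, t, rfl⟩ := h
  exact ⟨_, occursAt_append_append s P t⟩

theorem take_drop_take_drop {S : List α} {j k l m : ℕ} (h : k + l ≤ m) :
    ((S.drop j).take m |>.drop k).take l = (S.drop (j + k)).take l := by
  rw [drop_take, drop_drop, take_take, min_eq_left (by omega)]

theorem OccursAt.trans (hPQ : OccursAt P Q i) (hQS : OccursAt Q S j) :
    OccursAt P S (j + i) := by
  refine ⟨?_, by linarith [hPQ.2, hQS.2]⟩
  rw [← take_drop_take_drop (m := Q.length) hPQ.2, hQS.1, hPQ.1]

theorem OccursAt.of_occursAt_of_le (hP : OccursAt P S i) (hQ : OccursAt Q S j) (hji : j ≤ i)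
    (hend : i + P.length ≤ j + Q.length) : OccursAt P Q (i - j) := by
  refine ⟨?_, by omega⟩
  rw [← hQ.1, take_drop_take_drop (by omega), Nat.add_sub_cancel' hji, hP.1]

end Occurrence

section Power

variable (L : List α)

@[simp]
theorem length_listPow (k : ℕ) : (listPow L k).length = k * L.length := by
  simp [listPow]

@[simp]
theorem listPow_zero : listPow L 0 = [] := rfl

@[simp]
theorem listPow_one : listPow L 1 = L := by
  simp [listPow]

theorem listPow_add (m k : ℕ) : listPow L (m + k) = listPow L m ++ listPow L k := by
  rw [listPow, listPow, listPow, replicate_add, flatten_append]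

theorem drop_mul_length_listPow {q M : ℕ} (h : q ≤ M) :
    (listPow L M).drop (q * L.length) = listPow L (M - q) := by
  obtain ⟨e, rfl⟩ := Nat.exists_eq_add_of_le h
  rw [listPow_add, drop_append_of_le_length (by simp)]
  simp

theorem take_listPow {t e : ℕ} (htL : t ≤ L.length) (hte : t ≤ e * L.length) :
    (listPow L e).take t = L.take t := by
  cases e with
  | zero => simp_all
  | succ e => rw [add_comm, listPow_add, listPow_one, take_append_of_le_length htL]

theorem take_length_drop_listPow {M p : ℕ} (hp : p + L.length ≤ M * L.length) :
    ((listPow L M).drop p).take L.length = L.rotate p := by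
  obtain rfl | hL := eq_or_ne L []
  · simp
  set n := L.length
  obtain ⟨q, t, ht, rfl⟩ : ∃ q t, t < n ∧ p = q * n + t :=
    ⟨p / n, p % n, Nat.mod_lt p (length_pos_iff.2 hL), (Nat.div_add_mod' p n).symm⟩
  obtain ⟨e, rfl⟩ : ∃ e, M = q + 1 + e := by
    refine Nat.exists_eq_add_of_le (Nat.succ_le_of_lt (lt_of_not_ge fun hM => ?_))
    have := Nat.mul_le_mul_right n hM
    omega
  have hte : t ≤ e * n := by
    simp only [add_mul, one_mul] at hp
    omega
  rw [← rotate_mod, Nat.mul_add_mod_of_lt ht, rotate_eq_drop_append_take ht.le, ← drop_drop,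
    drop_mul_length_listPow L (by omega), show q + 1 + e - q = 1 + e by omega, listPow_add,
    listPow_one, drop_append_of_le_length ht.le, take_append, take_of_length_le (by simp [n]),
    length_drop, Nat.sub_sub_self ht.le, take_listPow L ht.le hte]

end Power

theorem exists_eq_listPow_of_append_comm {x y : List α} (h : x ++ y = y ++ x) :
    ∃ (z : List α) (k m : ℕ), x = listPow z k ∧ y = listPow z m := by
  induction hn : x.length + y.length using Nat.strong_induction_on generalizing x y with
  | _ n ih =>
  rcases eq_or_ne x [] with rfl | hx
  · exact ⟨y, 0, 1, rfl, (listPow_one y).symm⟩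
  rcases eq_or_ne y [] with rfl | hy
  · exact ⟨x, 1, 0, (listPow_one x).symm, rfl⟩
  rcases append_eq_append_iff.1 h with ⟨y', rfl, hcomm⟩ | ⟨x', rfl, hcomm⟩
  · obtain ⟨z, k, m, rfl, rfl⟩ := ih _ (by simp [← hn, length_pos_iff.2 hx]) hcomm rfl
    exact ⟨z, k, k + m, rfl, (listPow_add z k m).symm⟩
  · obtain ⟨z, k, m, rfl, rfl⟩ := ih _ (by simp [← hn, length_pos_iff.2 hy]) hcomm.symm rfl
    exact ⟨z, m + k, m, (listPow_add z m k).symm, rfl⟩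

def IsPrimitive (L : List α) : Prop :=
  ∀ (V : List α) (k : ℕ), 2 ≤ k → L ≠ listPow V k

namespace IsPrimitive

variable {L : List α}

theorem ne_nil (h : IsPrimitive L) : L ≠ [] := by
  rintro rfl
  exact h [] 2 le_rfl rfl

theorem dvd_of_rotate_eq_self (h : IsPrimitive L) {s : ℕ} (hs : L.rotate s = L) :
    L.length ∣ s := by
  set t := s % L.length
  have htn : t < L.length := Nat.mod_lt _ (length_pos_iff.2 h.ne_nil)
  rw [← rotate_mod, rotate_eq_drop_append_take htn.le] at hs
  have hcomm : L.drop t ++ L.take t = L.take t ++ L.drop t := by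
    rw [hs, take_append_drop]
  obtain ⟨z, k, m, hk, hm⟩ := exists_eq_listPow_of_append_comm hcomm
  by_contra hdvd
  have hk0 : k ≠ 0 := by
    rintro rfl
    simp only [listPow_zero, drop_eq_nil_iff] at hk
    omega
  have hm0 : m ≠ 0 := by
    rintro rfl
    simp only [listPow_zero, take_eq_nil_iff, h.ne_nil, or_false] at hm
    exact hdvd (Nat.dvd_of_mod_eq_zero hm)
  refine h z (m + k) (by omega) ?_
  rw [listPow_add, ← hm, ← hk, take_append_drop]

theorem dvd_of_occursAt_listPow (h : IsPrimitive L) {M p : ℕ}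
    (hp : OccursAt L (listPow L M) p) : L.length ∣ p :=
  h.dvd_of_rotate_eq_self <| by rw [← take_length_drop_listPow L (by simpa using hp.2), hp.1]

end IsPrimitive

section Rep

variable {L : List α} {r a b r' a' b' : ℕ}

theorem length_rep (ha : a ≤ L.length) (hb : b ≤ L.length) :
    (rep L r a b).length = a + r * L.length + b := by
  simp only [rep, length_append, length_drop, length_listPow, length_take, min_eq_left hb]
  omega

theorem occursAt_rep_listPow (L : List α) (r a b c : ℕ) {M : ℕ} (hM : c + r + 2 ≤ M) :
    OccursAt (rep L r a b) (listPow L M) (c * L.length + (L.length - a)) := by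
  obtain ⟨e, rfl⟩ : ∃ e, M = c + 1 + r + 1 + e := ⟨M - (c + r + 2), by omega⟩
  have hsplit : listPow L (c + 1 + r + 1 + e) =
      (listPow L c ++ L.take (L.length - a)) ++ rep L r a b ++ (L.drop b ++ listPow L e) := by
    simp only [rep, listPow_add, listPow_one, append_assoc]
    rw [← append_assoc (take _ L), take_append_drop, ← append_assoc (take b L),
      take_append_drop]
  rw [hsplit]
  convert occursAt_append_append _ _ _ using 1
  simp

theorem occursAt_self_rep (hr : 1 ≤ r) (ha : a ≤ L.length) : OccursAt L (rep L r a b) a := by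
  obtain ⟨r, rfl⟩ := Nat.exists_eq_add_of_le hr
  have hsplit : rep L (1 + r) a b = L.drop (L.length - a) ++ L ++ (listPow L r ++ L.take b) := by
    simp only [rep, listPow_add, listPow_one, append_assoc]
  rw [hsplit]
  convert occursAt_append_append _ _ _ using 1
  simp
  omega

theorem rep_infix_rep {c : ℕ} (ha : a ≤ L.length) (hb : b ≤ L.length) (ha' : a' ≤ L.length)
    (hb' : b' ≤ L.length) (hshift : a ≤ c * L.length + a')
    (hlen : (c + r) * L.length + b ≤ r' * L.length + b') : rep L r a b <:+: rep L r' a' b' := by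
  have hocc := occursAt_rep_listPow L r a b c (M := c + r + r' + 2) (by omega)
  have hocc' := occursAt_rep_listPow L r' a' b' 0 (M := c + r + r' + 2) (by omega)
  rw [zero_mul, zero_add] at hocc'
  rw [add_mul] at hlen
  refine (hocc.of_occursAt_of_le hocc' (by omega) ?_).isInfix
  rw [length_rep ha hb, length_rep ha' hb']
  omega

theorem IsPrimitive.exists_of_rep_infix_rep (hprim : IsPrimitive L) (hr : 1 ≤ r)
    (ha : a ≤ L.length) (hb : b ≤ L.length) (ha' : a' < L.length) (hb' : b' ≤ L.length)
    (h : rep L r a b <:+: rep L r' a' b') :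
    ∃ c, a ≤ c * L.length + a' ∧ (c + r) * L.length + b ≤ r' * L.length + b' := by
  obtain ⟨i, hi⟩ := h.exists_occursAt
  have hocc' := occursAt_rep_listPow L r' a' b' 0 (M := r' + 2) (by omega)
  obtain ⟨k, hk⟩ :=
    hprim.dvd_of_occursAt_listPow ((occursAt_self_rep hr ha).trans (hi.trans hocc'))
  have hfit := hi.2
  rw [length_rep ha hb, length_rep ha'.le hb'] at hfit
  obtain ⟨c, rfl⟩ : ∃ c, k = c + 1 := Nat.exists_eq_succ_of_ne_zero (by rintro rfl; omega)
  have hshift : i + a = c * L.length + a' := by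
    rw [zero_mul, mul_add, mul_one, mul_comm] at hk
    omega
  exact ⟨c, by omega, by rw [add_mul]; omega⟩

theorem IsPrimitive.rep_infix_rep_iff (hprim : IsPrimitive L) (hr : 1 ≤ r)
    (ha : a ≤ L.length) (hb : b ≤ L.length) (ha' : a' < L.length) (hb' : b' ≤ L.length) :
    rep L r a b <:+: rep L r' a' b' ↔
      ∃ c, a ≤ c * L.length + a' ∧ (c + r) * L.length + b ≤ r' * L.length + b' :=
  ⟨hprim.exists_of_rep_infix_rep hr ha hb ha' hb', fun ⟨_, hshift, hlen⟩ =>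
    rep_infix_rep ha hb ha'.le hb' hshift hlen⟩

end Rep

theorem exists_shift_iff {n r a b r' a' b' : ℕ} (ha : a ≤ n) (hb : b ≤ n) (hb' : b' < n) :
    (∃ c, a ≤ c * n + a' ∧ (c + r) * n + b ≤ r' * n + b') ↔
      ((r = r' ∧ a ≤ a' ∧ b ≤ b') ∨ (r + 1 = r' ∧ a ≤ a') ∨
       (r + 1 = r' ∧ b ≤ b') ∨ (r + 2 ≤ r')) := by
  constructor
  · rintro ⟨c, hshift, hlen⟩
    have hcr : c + r ≤ r' := by
      by_contra! hlt
      have := Nat.mul_le_mul_right n (Nat.succ_le_of_lt hlt)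
      rw [Nat.succ_mul] at this
      omega
    obtain ⟨d, rfl⟩ := Nat.exists_eq_add_of_le hcr
    rw [add_mul _ d] at hlen
    rcases Nat.eq_zero_or_pos c with rfl | hc <;> rcases Nat.eq_zero_or_pos d with rfl | hd <;>
      simp -failIfUnchanged only [zero_mul, zero_add, add_zero, true_and] at hshift hlen ⊢ <;>
      omega
  · rintro (⟨rfl, hle, hle'⟩ | ⟨rfl, hle⟩ | ⟨rfl, hle'⟩ | hr') <;>
      simp only [add_mul, one_mul]
    · exact ⟨0, by omega, by omega⟩
    · exact ⟨0, by omega, by omega⟩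
    · exact ⟨1, by omega, by omega⟩
    · have := Nat.mul_le_mul_right n hr'
      rw [add_mul] at this
      exact ⟨1, by omega, by omega⟩

end

theorem stmt13_general {α : Type*} (L : List α) (r a b r' a' b' : ℕ)
    (hprim : ∀ (V : List α) (k : ℕ), 2 ≤ k → L ≠ listPow V k)
    (ha : a < L.length) (hb : b < L.length)
    (ha' : a' < L.length) (hb' : b' < L.length)
    (hr : 1 ≤ r) :
    rep L r a b <:+: rep L r' a' b' ↔
      ((r = r' ∧ a ≤ a' ∧ b ≤ b') ∨ (r + 1 = r' ∧ a ≤ a') ∨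
       (r + 1 = r' ∧ b ≤ b') ∨ (r + 2 ≤ r')) :=
  (IsPrimitive.rep_infix_rep_iff hprim hr ha.le hb.le ha' hb'.le).trans
    (exists_shift_iff ha.le hb.le hb')

/-- A periodic string `(L, r, a, b)` occurs in a periodic string `(L, r', a', b')`
with the same (primitive) Lyndon root `L` iff (1) `r = r'`, `a ≤ a'`, `b ≤ b'`; or
(2) `r = r' - 1` and `a ≤ a'`; or (3) `r = r' - 1` and `b ≤ b'`; or (4) `r ≤ r' - 2`. -/
theorem stmt13 {α : Type*} (L : List α) (r a b r' a' b' : ℕ)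
    (hL : L ≠ []) (hprim : ∀ (V : List α) (k : ℕ), 2 ≤ k → L ≠ listPow V k)
    (ha : a < L.length) (hb : b < L.length)
    (ha' : a' < L.length) (hb' : b' < L.length)
    (hr : 1 ≤ r) (hr' : 1 ≤ r') :
    rep L r a b <:+: rep L r' a' b' ↔
      ((r = r' ∧ a ≤ a' ∧ b ≤ b') ∨ (r + 1 = r' ∧ a ≤ a') ∨
       (r + 1 = r' ∧ b ≤ b') ∨ (r + 2 ≤ r')) :=
  stmt13_general L r a b r' a' b' hprim ha hb ha' hb' hr
end

section
/- Let F1, F2, F3 be three consecutive fragments of T with |F1| = |F3| = x and |F2| = y ≥ 8x, and let D be a dictionary of patterns none of which is highly periodic (per(P) > |P|/4 for all P ∈ D). Then the number of distinct patterns P ∈ D that have an occurrence starting in F1 and ending in F3 but occur in neither F1F2 nor F2F3 equals Count(F1F2F3) - Count(F1F2) - Count(F2F3) + Count(F2), where Count(S) is the total number of occurrences of patterns of D in S (counted with multiplicity). -/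
/-- `Count(S)`: the total number of occurrences of patterns of `D` in `S`. -/
noncomputable def CountOcc {α : Type*} (D : Finset (List α)) (S : List α) : ℕ :=
  ∑ P ∈ D, {i : ℕ | OccursAt P S i}.ncard

/-
Classify the occurrences of a pattern `P` in `F1F2F3` by whether they lie in `F1F2`, in `F2F3`,
or in neither. Inclusion–exclusion gives, for every `P`,
`Count_P(F1F2F3) + Count_P(F2) = Count_P(F1F2) + Count_P(F2F3) + #(occurrences from F1 to F3)`.
An occurrence from `F1` to `F3` forces `|P| > y ≥ 8x`, so all occurrences of `P` in `F1F2F3`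
start within distance `< 2x ≤ |P|/4` of each other; two distinct ones would give a period
`≤ |P|/4`. Hence such a `P` occurs exactly once in `F1F2F3`, in particular neither in `F1F2` nor
in `F2F3`, and the last term is the indicator of the patterns being counted.
-/

section Occurrences

variable {α : Type*} {P A B S : List α} {i j : ℕ}

theorem occursAt_iff_getElem? :
    OccursAt P S i ↔ i + P.length ≤ S.length ∧ ∀ k < P.length, S[i + k]? = P[k]? := by
  constructor
  · rintro ⟨hP, hlen⟩
    refine ⟨hlen, fun k hk => ?_⟩
    conv_rhs => rw [← hP]
    rw [List.getElem?_take, if_pos hk, List.getElem?_drop]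
  · rintro ⟨hlen, hP⟩
    refine ⟨List.ext_getElem? fun k => ?_, hlen⟩
    by_cases hk : k < P.length
    · rw [List.getElem?_take, if_pos hk, List.getElem?_drop, hP k hk]
    · rw [List.getElem?_take, if_neg hk, eq_comm, List.getElem?_eq_none_iff]
      omega

theorem occursAt_append_left_iff (h : i + P.length ≤ A.length) :
    OccursAt P (A ++ B) i ↔ OccursAt P A i := by
  simp only [occursAt_iff_getElem?, List.length_append]
  refine and_congr (by omega) (forall₂_congr fun k hk => ?_)
  rw [List.getElem?_append_left (by omega)]

theorem occursAt_append_right_iff :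
    OccursAt P (A ++ B) (A.length + j) ↔ OccursAt P B j := by
  simp only [occursAt_iff_getElem?, List.length_append]
  refine and_congr (by omega) (forall₂_congr fun k hk => ?_)
  rw [List.getElem?_append_right (by omega), show A.length + j + k - A.length = j + k by omega]

theorem infix_iff_exists_occursAt : P <:+: S ↔ ∃ i, OccursAt P S i := by
  constructor
  · rintro ⟨s, t, rfl⟩
    refine ⟨s.length, ?_, by simp⟩
    rw [List.append_assoc, List.drop_left]
    exact List.take_left
  · rintro ⟨i, hP, -⟩
    rw [← hP]
    exact (List.take_prefix _ _).isInfix.trans (List.drop_suffix i S).isInfix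

theorem setOf_occursAt_finite : {i | OccursAt P S i}.Finite :=
  (Set.finite_Iic S.length).subset fun i hi => by
    have := hi.2
    simp only [Set.mem_Iic]
    omega

theorem isPeriod_sub_of_occursAt (hi : OccursAt P S i) (hj : OccursAt P S j) (hij : i < j) :
    IsPeriod P (j - i) := by
  refine ⟨by omega, fun k hk => ?_⟩
  rw [← (occursAt_iff_getElem?.1 hi).2 (k + (j - i)) hk,
    ← (occursAt_iff_getElem?.1 hj).2 k (by omega), show i + (k + (j - i)) = j + k by omega]

-- Two occurrences are at distance at most `|S| - |P|`, and their distance is a period of `P`.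
theorem eq_of_occursAt_of_occursAt (hP : ¬ 4 * minPeriod P ≤ P.length)
    (hS : 4 * (S.length - P.length) ≤ P.length)
    (hi : OccursAt P S i) (hj : OccursAt P S j) : i = j := by
  have close : ∀ {a b}, OccursAt P S a → OccursAt P S b → a < b → False :=
    fun {a b} ha hb hab => by
      have : minPeriod P ≤ b - a := Nat.sInf_le (isPeriod_sub_of_occursAt ha hb hab)
      have := hb.2
      omega
  rcases Nat.lt_trichotomy i j with h | h | h
  · exact (close hi hj h).elim
  · exact h
  · exact (close hj hi h).elim

theorem setOf_occursAt_append_inter_left :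
    {i | OccursAt P (A ++ B) i} ∩ {i | i + P.length ≤ A.length} = {i | OccursAt P A i} := by
  ext i
  simp only [Set.mem_inter_iff, Set.mem_ofPred_eq]
  exact ⟨fun ⟨h, hi⟩ => (occursAt_append_left_iff hi).1 h,
    fun h => ⟨(occursAt_append_left_iff h.2).2 h, h.2⟩⟩

theorem image_setOf_occursAt_append_right :
    (A.length + ·) '' {j | OccursAt P B j}
      = {i | OccursAt P (A ++ B) i} ∩ {i | A.length ≤ i} := by
  ext i
  simp only [Set.mem_image, Set.mem_inter_iff, Set.mem_ofPred_eq]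
  constructor
  · rintro ⟨j, hj, rfl⟩
    exact ⟨occursAt_append_right_iff.2 hj, by omega⟩
  · rintro ⟨h, hi⟩
    obtain ⟨j, rfl⟩ := Nat.exists_eq_add_of_le hi
    exact ⟨j, occursAt_append_right_iff.1 h, rfl⟩

end Occurrences

theorem Set.ncard_add_ncard_inter_inter {β : Type*} {s : Set β} (hs : s.Finite) (t u : Set β) :
    s.ncard + (s ∩ t ∩ u).ncard
      = (s ∩ t).ncard + (s ∩ u).ncard + (s \ (t ∪ u)).ncard := by
  rw [← Set.ncard_union_add_ncard_inter _ _ (hs.inter_of_left t) (hs.inter_of_left u),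
    ← Set.inter_union_distrib_left, ← Set.inter_inter_distrib_left,
    ← Set.ncard_inter_add_ncard_sdiff_eq_ncard s (t ∪ u) hs, Set.inter_assoc]
  omega

-- The `(F1, F3)`-occurrences of `P`, as a set of starting positions in `F1F2F3`.
def crossingOccs {α : Type*} (P F1 F2 F3 : List α) : Set ℕ :=
  {i | OccursAt P (F1 ++ F2 ++ F3) i ∧ i < F1.length ∧ F1.length + F2.length < i + P.length}

section Crossing

variable {α : Type*} (P F1 F2 F3 : List α)

theorem ncard_setOf_occursAt_append_append :
    {i | OccursAt P (F1 ++ F2 ++ F3) i}.ncard + {i | OccursAt P F2 i}.ncard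
      = {i | OccursAt P (F1 ++ F2) i}.ncard + {i | OccursAt P (F2 ++ F3) i}.ncard
        + (crossingOccs P F1 F2 F3).ncard := by
  set O := {i | OccursAt P (F1 ++ F2 ++ F3) i}
  set L := {i | i + P.length ≤ F1.length + F2.length}
  set R := {i | F1.length ≤ i}
  have hL : O ∩ L = {i | OccursAt P (F1 ++ F2) i} := by
    simpa only [List.length_append] using
      setOf_occursAt_append_inter_left (P := P) (A := F1 ++ F2) (B := F3)
  have hR : O ∩ R = (F1.length + ·) '' {j | OccursAt P (F2 ++ F3) j} := by
    simp only [O, R, List.append_assoc, image_setOf_occursAt_append_right]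
  have hLR : O ∩ L ∩ R = (F1.length + ·) '' {j | OccursAt P F2 j} := by
    rw [Set.inter_right_comm, hR, ← Set.image_inter_preimage,
      ← setOf_occursAt_append_inter_left (P := P) (A := F2) (B := F3)]
    congr 2
    ext j
    simp only [L, Set.mem_preimage, Set.mem_ofPred_eq]
    omega
  have hcross : O \ (L ∪ R) = crossingOccs P F1 F2 F3 := by
    ext i
    simp only [crossingOccs, O, L, R, Set.mem_sdiff, Set.mem_union, Set.mem_ofPred_eq]
    exact and_congr_right fun _ => by omega
  have := Set.ncard_add_ncard_inter_inter (s := O) setOf_occursAt_finite L R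
  rwa [hLR, hL, hR, hcross, Set.ncard_image_of_injective _ (add_right_injective _),
    Set.ncard_image_of_injective _ (add_right_injective _)] at this

variable {P F1 F2 F3}

theorem eq_of_mem_crossingOccs (hP : ¬ 4 * minPeriod P ≤ P.length)
    (hx : F1.length = F3.length) (hy : 8 * F1.length ≤ F2.length)
    {i j : ℕ} (hi : i ∈ crossingOccs P F1 F2 F3) (hj : OccursAt P (F1 ++ F2 ++ F3) j) :
    j = i := by
  obtain ⟨hocc, hi1, hi3⟩ := hi
  refine eq_of_occursAt_of_occursAt hP ?_ hj hocc
  simp only [List.length_append]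
  omega

theorem ncard_crossingOccs (hP : ¬ 4 * minPeriod P ≤ P.length)
    (hx : F1.length = F3.length) (hy : 8 * F1.length ≤ F2.length)
    [Decidable (crossingOccs P F1 F2 F3).Nonempty] :
    (crossingOccs P F1 F2 F3).ncard = if (crossingOccs P F1 F2 F3).Nonempty then 1 else 0 := by
  split_ifs with h
  · obtain ⟨i, hi⟩ := h
    rw [Set.ncard_eq_one]
    exact ⟨i, Set.eq_singleton_iff_unique_mem.2
      ⟨hi, fun j hj => eq_of_mem_crossingOccs hP hx hy hi hj.1⟩⟩
  · rw [Set.not_nonempty_iff_eq_empty.1 h, Set.ncard_empty]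

theorem not_infix_of_mem_crossingOccs (hP : ¬ 4 * minPeriod P ≤ P.length)
    (hx : F1.length = F3.length) (hy : 8 * F1.length ≤ F2.length)
    {i : ℕ} (hi : i ∈ crossingOccs P F1 F2 F3) :
    ¬ P <:+: F1 ++ F2 ∧ ¬ P <:+: F2 ++ F3 := by
  obtain ⟨-, hi1, hi3⟩ := id hi
  constructor <;> rw [infix_iff_exists_occursAt] <;> rintro ⟨j, hj⟩
  · have hend := hj.2
    simp only [List.length_append] at hend
    have := eq_of_mem_crossingOccs hP hx hy hi
      ((occursAt_append_left_iff (B := F3) (by simpa)).2 hj)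
    omega
  · have hS : OccursAt P (F1 ++ F2 ++ F3) (F1.length + j) := by
      rw [List.append_assoc]; exact occursAt_append_right_iff.2 hj
    have := eq_of_mem_crossingOccs hP hx hy hi hS
    omega

end Crossing

/-- For consecutive fragments `F1 F2 F3` with `|F1| = |F3|`, `|F2| ≥ 8·|F1|`, and a
dictionary with no highly periodic pattern, the number of distinct patterns with an
occurrence starting in `F1` and ending in `F3` that occur in neither `F1F2` nor
`F2F3` equals `Count(F1F2F3) - Count(F1F2) - Count(F2F3) + Count(F2)`. -/
theorem stmt14 {α : Type*} (D : Finset (List α)) (F1 F2 F3 : List α)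
    (hx : F1.length = F3.length) (hy : 8 * F1.length ≤ F2.length)
    (hD : ∀ P ∈ D, P ≠ [] ∧ ¬ (4 * minPeriod P ≤ P.length)) :
    {P : List α | P ∈ D ∧
        (∃ s, OccursAt P (F1 ++ F2 ++ F3) s ∧ s < F1.length ∧
          F1.length + F2.length < s + P.length) ∧
        ¬ (P <:+: F1 ++ F2) ∧ ¬ (P <:+: F2 ++ F3)}.ncard
      + CountOcc D (F1 ++ F2) + CountOcc D (F2 ++ F3)
      = CountOcc D (F1 ++ F2 ++ F3) + CountOcc D F2 := by
  classical
  have hcounted : {P : List α | P ∈ D ∧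
      (∃ s, OccursAt P (F1 ++ F2 ++ F3) s ∧ s < F1.length ∧
        F1.length + F2.length < s + P.length) ∧
      ¬ (P <:+: F1 ++ F2) ∧ ¬ (P <:+: F2 ++ F3)}
      = ↑(D.filter fun P => (crossingOccs P F1 F2 F3).Nonempty) := by
    ext P
    simp only [Set.mem_ofPred_eq, Finset.coe_filter]
    refine and_congr_right fun hP => ⟨fun h => h.1, fun h => ⟨h, ?_⟩⟩
    obtain ⟨i, hi⟩ := h
    exact not_infix_of_mem_crossingOccs (hD P hP).2 hx hy hi
  have hcrossing : ∑ P ∈ D, (crossingOccs P F1 F2 F3).ncard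
      = (D.filter fun P => (crossingOccs P F1 F2 F3).Nonempty).card := by
    rw [Finset.card_filter]
    exact Finset.sum_congr rfl fun P hP => ncard_crossingOccs (hD P hP).2 hx hy
  have hsum := Finset.sum_congr rfl fun P (_ : P ∈ D) =>
    ncard_setOf_occursAt_append_append P F1 F2 F3
  simp only [Finset.sum_add_distrib] at hsum
  rw [hcounted, Set.ncard_coe_finset, ← hcrossing]
  unfold CountOcc
  omega
end

section
/- Let F1, F2, F3 be consecutive fragments with |F1| = |F3| ≤ |F2|/8. If F2 is not periodic (per(F2) > |F2|/2), then no highly periodic pattern P (per(P) ≤ |P|/4) has an occurrence starting in F1 and ending in F3. -/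
/-!
An occurrence of `P` that starts in `F1` and ends in `F3` contains all of `F2`, so every period
of `P` is a period of `F2`. With `|F1| = |F3| ≤ |F2|/8` we get `|P| ≤ 5|F2|/4`, hence
`per(F2) ≤ per(P) ≤ |P|/4 ≤ 5|F2|/16 < |F2|/2`, contradicting the aperiodicity of `F2`.
-/

section Periods

variable {α : Type*}

theorem isPeriod_minPeriod {S : List α} (hS : S ≠ []) : IsPeriod S (minPeriod S) :=
  Nat.sInf_mem (s := {p | IsPeriod S p})
    ⟨S.length, List.length_pos_iff.2 hS, fun i hi => by omega⟩

theorem IsPeriod.of_infix {S Q : List α} {p : ℕ} (h : IsPeriod S p) (hQ : Q <:+: S) :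
    IsPeriod Q p := by
  obtain ⟨A, B, rfl⟩ := hQ
  have hget : ∀ i < Q.length, Q[i]? = (A ++ Q ++ B)[A.length + i]? := fun i hi => by
    rw [List.append_assoc, List.getElem?_append_right (by omega), Nat.add_sub_cancel_left,
      List.getElem?_append_left hi]
  refine ⟨h.1, fun i hi => ?_⟩
  rw [hget i (by omega), hget (i + p) hi, ← Nat.add_assoc]
  exact h.2 _ (by simp; omega)

theorem OccursAt.infix_of_covers {P A B C : List α} {s : ℕ} (hocc : OccursAt P (A ++ B ++ C) s)
    (hs : s ≤ A.length) (hcov : A.length + B.length ≤ s + P.length) : B <:+: P := by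
  refine ⟨A.drop s, C.take (s + P.length - A.length - B.length), ?_⟩
  conv_rhs => rw [← hocc.1]
  simp only [List.append_assoc, List.drop_append_of_le_length hs, List.take_append,
    List.length_drop]
  rw [List.take_of_length_le (l := A.drop s) (by simp; omega),
    List.take_of_length_le (l := B) (by omega)]
  congr 3
  omega

end Periods

/-- For consecutive fragments with `|F1| = |F3| ≤ |F2|/8`: if `F2` is not periodic,
then no highly periodic pattern `P` has an occurrence in `F1F2F3` starting in `F1`
and ending in `F3`. -/
theorem stmt15 {α : Type*} (F1 F2 F3 P : List α)
    (hx : F1.length = F3.length) (hy : 8 * F1.length ≤ F2.length)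
    (hnp : 2 * minPeriod F2 > F2.length)
    (hP : P ≠ []) (hhp : 4 * minPeriod P ≤ P.length) :
    ¬ ∃ s, OccursAt P (F1 ++ F2 ++ F3) s ∧ s < F1.length ∧
        F1.length + F2.length < s + P.length := by
  rintro ⟨s, hocc, hstart, hend⟩
  have hF2 : F2 <:+: P := hocc.infix_of_covers hstart.le hend.le
  have hper : minPeriod F2 ≤ minPeriod P :=
    minPeriod_le ((isPeriod_minPeriod hP).of_infix hF2)
  have hlen : s + P.length ≤ F1.length + F2.length + F3.length := by
    simpa [Nat.add_assoc] using hocc.2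
  omega
end
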